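/- arXiv:1605.09281 — 5 statements merged into one kernel-verified Lean document; each statement's English description precedes it below -/
import Mathlib

section
/- Let r ≥ 2, let ρ > 4^(1/r), and set σ = (√(ρ^r) + √(ρ^r − 4))/2. Suppose (a_i)_{i=−1}^{ℓ} is a sequence of nonnegative reals with a_{−1} = 0, a_0 > 0, and a_i ≤ √(ρ^r)·a_{i−1} − a_{i−2} for i = 1, …, ℓ. Then a_ℓ ≤ a_0·(σ^{ℓ+1} − σ^{-(ℓ+1)})/(σ − σ^{-1}). -/
/-!
Writing `√(ρ^r) = σ + σ⁻¹`, the recurrence reads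
`a i - σ a (i-1) ≤ σ⁻¹ (a (i-1) - σ a (i-2))`, so `a n - σ a (n-1) ≤ σ^(-n) a 0`.
Unrolling `a n ≤ σ a (n-1) + σ^(-n) a 0` gives
`a n ≤ a 0 (σ^n + σ^(n-2) + ⋯ + σ^(-n)) = a 0 (σ^(n+1) - σ^(-(n+1))) / (σ - σ⁻¹)`.
-/

lemma four_lt_pow_of_rpow_one_div_lt {r : ℕ} (hr : r ≠ 0) {ρ : ℝ}
    (hρ : (4 : ℝ) ^ ((1 : ℝ) / r) < ρ) : 4 < ρ ^ r := by
  have hρ0 : 0 ≤ ρ := le_trans (by positivity) hρ.le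
  rw [one_div, Real.rpow_inv_lt_iff_of_pos (by norm_num) hρ0 (by positivity)] at hρ
  exact_mod_cast hρ

section LargerRoot

variable {s : ℝ}

lemma one_lt_add_sqrt_sq_sub_four_div_two (hs : 2 < s) : 1 < (s + √(s ^ 2 - 4)) / 2 := by
  have := Real.sqrt_nonneg (s ^ 2 - 4)
  linarith

lemma add_sqrt_sq_sub_four_div_two_add_inv (hs : 2 ≤ s) :
    (s + √(s ^ 2 - 4)) / 2 + ((s + √(s ^ 2 - 4)) / 2)⁻¹ = s := by
  have hsq : √(s ^ 2 - 4) ^ 2 = s ^ 2 - 4 := Real.sq_sqrt (by nlinarith)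
  have hinv : ((s + √(s ^ 2 - 4)) / 2)⁻¹ = (s - √(s ^ 2 - 4)) / 2 :=
    inv_eq_of_mul_eq_one_right (by linear_combination (-1 / 4 : ℝ) * hsq)
  rw [hinv]
  ring

end LargerRoot

lemma mul_zpow_sub_zpow_div_add_zpow {σ : ℝ} (hσ : σ - σ⁻¹ ≠ 0) (n : ℤ) :
    σ * ((σ ^ (n + 1) - σ ^ (-(n + 1))) / (σ - σ⁻¹)) + σ ^ (-(n + 1)) =
      (σ ^ (n + 1 + 1) - σ ^ (-(n + 1 + 1))) / (σ - σ⁻¹) := by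
  have hσ0 : σ ≠ 0 := by rintro rfl; simp at hσ
  rw [show -(n + 1 + 1) = -(n + 1) - 1 by ring, zpow_add_one₀ hσ0 (n + 1),
    zpow_sub_one₀ hσ0 (-(n + 1)), eq_div_iff hσ, add_mul, mul_div_assoc', div_mul_cancel₀ _ hσ]
  ring

section Recurrence

variable {σ : ℝ} {a : ℤ → ℝ} {ℓ : ℤ}

lemma sub_mul_le_zpow_neg_mul (hσ : 0 < σ) (hm1 : a (-1) = 0)
    (hrec : ∀ i : ℤ, 1 ≤ i → i ≤ ℓ → a i ≤ (σ + σ⁻¹) * a (i - 1) - a (i - 2)) :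
    ∀ n : ℤ, 0 ≤ n → n ≤ ℓ → a n - σ * a (n - 1) ≤ σ ^ (-n) * a 0 := by
  refine Int.leInduction (by simp [hm1]) fun n hn ih hnℓ => ?_
  have hstep : a (n + 1) - σ * a n ≤ σ⁻¹ * (a n - σ * a (n - 1)) := by
    have := hrec (n + 1) (by omega) hnℓ
    rw [add_sub_cancel_right, show n + 1 - 2 = n - 1 by ring] at this
    rw [mul_sub, ← mul_assoc, inv_mul_cancel₀ hσ.ne', one_mul]
    linarith
  calc a (n + 1) - σ * a (n + 1 - 1)
      ≤ σ⁻¹ * (σ ^ (-n) * a 0) := by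
        rw [add_sub_cancel_right]
        exact hstep.trans (mul_le_mul_of_nonneg_left (ih (by omega)) (by positivity))
    _ = σ ^ (-(n + 1)) * a 0 := by
        rw [neg_add, zpow_add₀ hσ.ne', zpow_neg_one]
        ring

lemma le_mul_zpow_sub_zpow_div (hσ : 1 < σ) (hm1 : a (-1) = 0)
    (hrec : ∀ i : ℤ, 1 ≤ i → i ≤ ℓ → a i ≤ (σ + σ⁻¹) * a (i - 1) - a (i - 2)) :
    ∀ n : ℤ, 0 ≤ n → n ≤ ℓ → a n ≤ a 0 * (σ ^ (n + 1) - σ ^ (-(n + 1))) / (σ - σ⁻¹) := by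
  have hσ0 : 0 < σ := by linarith
  have hσσ : σ - σ⁻¹ ≠ 0 := (sub_pos.2 ((inv_lt_one_of_one_lt₀ hσ).trans hσ)).ne'
  refine Int.leInduction ?_ fun n hn ih hnℓ => ?_
  · intro _
    rw [zero_add, zpow_one, zpow_neg_one, mul_div_cancel_right₀ _ hσσ]
  · have hfirst := sub_mul_le_zpow_neg_mul hσ0 hm1 hrec (n + 1) (by omega) hnℓ
    rw [add_sub_cancel_right] at hfirst
    calc a (n + 1)
        ≤ σ * (a 0 * (σ ^ (n + 1) - σ ^ (-(n + 1))) / (σ - σ⁻¹)) + σ ^ (-(n + 1)) * a 0 := by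
          linarith [mul_le_mul_of_nonneg_left (ih (by omega)) hσ0.le]
      _ = a 0 * (σ ^ (n + 1 + 1) - σ ^ (-(n + 1 + 1))) / (σ - σ⁻¹) := by
          rw [mul_div_assoc, mul_div_assoc, ← mul_zpow_sub_zpow_div_add_zpow hσσ n]
          ring

end Recurrence

theorem stmt_2_general (r : ℕ) (hr : 2 ≤ r) (ρ : ℝ) (hρ : ρ > (4 : ℝ) ^ ((1 : ℝ) / r))
    (σ : ℝ) (hσ : σ = (Real.sqrt (ρ ^ r) + Real.sqrt (ρ ^ r - 4)) / 2)
    (ℓ : ℕ) (a : ℤ → ℝ)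
    (hm1 : a (-1) = 0)
    (hrec : ∀ i : ℤ, 1 ≤ i → i ≤ ℓ → a i ≤ Real.sqrt (ρ ^ r) * a (i - 1) - a (i - 2)) :
    a ℓ ≤ a 0 * (σ ^ (ℓ + 1) - σ ^ (-(ℓ + 1 : ℤ))) / (σ - σ⁻¹) := by
  have h4 : 4 < ρ ^ r := four_lt_pow_of_rpow_one_div_lt (by omega) hρ
  set s := √(ρ ^ r) with hs_def
  have hs : 2 < s := Real.lt_sqrt_of_sq_lt (by linarith)
  rw [← Real.sq_sqrt (h4.trans' (by norm_num)).le, ← hs_def] at hσ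
  have hσs : σ + σ⁻¹ = s := hσ ▸ add_sqrt_sq_sub_four_div_two_add_inv hs.le
  have hσ1 : 1 < σ := hσ ▸ one_lt_add_sqrt_sq_sub_four_div_two hs
  exact_mod_cast le_mul_zpow_sub_zpow_div hσ1 hm1 (hσs ▸ hrec) ℓ (by positivity) le_rfl

theorem stmt_2 (r : ℕ) (hr : 2 ≤ r) (ρ : ℝ) (hρ : ρ > (4 : ℝ) ^ ((1 : ℝ) / r))
    (σ : ℝ) (hσ : σ = (Real.sqrt (ρ ^ r) + Real.sqrt (ρ ^ r - 4)) / 2)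
    (ℓ : ℕ) (a : ℤ → ℝ)
    (hnn : ∀ i : ℤ, -1 ≤ i → i ≤ ℓ → 0 ≤ a i)
    (hm1 : a (-1) = 0) (h0 : 0 < a 0)
    (hrec : ∀ i : ℤ, 1 ≤ i → i ≤ ℓ → a i ≤ Real.sqrt (ρ ^ r) * a (i - 1) - a (i - 2)) :
    a ℓ ≤ a 0 * (σ ^ (ℓ + 1) - σ ^ (-(ℓ + 1 : ℤ))) / (σ - σ⁻¹) :=
  stmt_2_general r hr ρ hρ σ hσ ℓ a hm1 hrec
end

section
/- Let H be a connected r-uniform hypergraph (r ≥ 2) with diameter D, and let H' = H − e be a connected sub-hypergraph obtained by deleting one edge e of H. Then diam(H') ≤ r(D+1). -/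
/-- `hconn E k u v` : there is a walk of length `k` from `u` to `v` in the hypergraph
with edge set `E`, i.e. an alternating sequence of vertices and edges where consecutive
vertices both lie in the connecting edge. -/
def hconn {n : ℕ} (E : Finset (Finset (Fin n))) : ℕ → Fin n → Fin n → Prop
  | 0, u, v => u = v
  | k + 1, u, v => ∃ e ∈ E, ∃ w ∈ e, u ∈ e ∧ hconn E k w v

/-- Distance between two vertices of a hypergraph: minimum length of a connecting walk. -/
noncomputable def hdist {n : ℕ} (E : Finset (Finset (Fin n))) (u v : Fin n) : ℕ :=
  sInf {k | hconn E k u v}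

/-- Diameter of a hypergraph: maximum distance between two vertices. -/
noncomputable def hdiam {n : ℕ} (E : Finset (Finset (Fin n))) : ℕ :=
  sSup {d | ∃ u v : Fin n, hdist E u v = d}

/-- A hypergraph is connected if any two vertices are joined by a walk. -/
def HConnected {n : ℕ} (E : Finset (Finset (Fin n))) : Prop :=
  ∀ u v : Fin n, ∃ k, hconn E k u v

/-- Degree of a vertex: the number of edges containing it. -/
def hdeg {n : ℕ} (E : Finset (Finset (Fin n))) (v : Fin n) : ℕ :=
  (E.filter (fun e => v ∈ e)).card


/-!
Suppose `u, v` are at distance `M > r(D+1)` in `H' = H - e`, and mark the points `y₀, …, y_r`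
at distances `0, D+1, …, r(D+1)` from `u` along a shortest `H'`-walk, so that
`d'(yⱼ, yₖ) ≥ (k-j)(D+1)`. Consecutive marks are at `H`-distance `≤ D`, so a shortest `H`-walk
between them must use `e`; hence if `cⱼ ∈ e` is a vertex of `e` nearest to `yⱼ` in `H'`, then
`d'(yⱼ, cⱼ) + d'(yⱼ₊₁, cⱼ₊₁) < D`. The `r + 1` vertices `cⱼ` of the `r`-element edge `e` cannot
all be distinct, and `cⱼ = cₖ` gives `d'(yⱼ, yₖ) ≤ d'(yⱼ, cⱼ) + d'(yₖ, cₖ)`, which is `< D + 1`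
if `k = j + 1` and `< 2(D+1)` otherwise.
-/

section Hypergraph

variable {n : ℕ} {E : Finset (Finset (Fin n))}

theorem hconn.trans {a b : ℕ} {u w v : Fin n} (h₁ : hconn E a u w) (h₂ : hconn E b w v) :
    hconn E (a + b) u v := by
  induction a generalizing u with
  | zero => cases h₁; simpa using h₂
  | succ a ih =>
    obtain ⟨f, hf, w', hw', hu, h₁⟩ := h₁
    exact (Nat.succ_add a b) ▸ ⟨f, hf, w', hw', hu, ih h₁⟩

theorem hconn_one_of_mem {f : Finset (Fin n)} {a b : Fin n} (hf : f ∈ E) (ha : a ∈ f)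
    (hb : b ∈ f) : hconn E 1 a b :=
  ⟨f, hf, b, hb, ha, rfl⟩

theorem hconn.symm {k : ℕ} {u v : Fin n} (h : hconn E k u v) : hconn E k v u := by
  induction k generalizing u with
  | zero => exact Eq.symm h
  | succ k ih =>
    obtain ⟨f, hf, w, hw, hu, h⟩ := h
    exact (ih h).trans (hconn_one_of_mem hf hw hu)

theorem hconn.exists_of_add {a b : ℕ} {u v : Fin n} (h : hconn E (a + b) u v) :
    ∃ w, hconn E a u w ∧ hconn E b w v := by
  induction a generalizing u with
  | zero => exact ⟨u, rfl, by simpa using h⟩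
  | succ a ih =>
    rw [Nat.succ_add] at h
    obtain ⟨f, hf, w, hw, hu, h⟩ := h
    obtain ⟨w', h₁, h₂⟩ := ih h
    exact ⟨w', ⟨f, hf, w, hw, hu, h₁⟩, h₂⟩

/-- A walk in `E` either avoids `e`, or its parts before the first and after the last use of `e`
are walks in `E.erase e`. -/
theorem hconn.erase_or_exists {e : Finset (Fin n)} {k : ℕ} {u v : Fin n} (h : hconn E k u v) :
    hconn (E.erase e) k u v ∨ ∃ a ∈ e, ∃ b ∈ e, ∃ k₁ k₂, k₁ + k₂ < k ∧
      hconn (E.erase e) k₁ u a ∧ hconn (E.erase e) k₂ b v := by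
  induction k generalizing u with
  | zero => exact Or.inl h
  | succ k ih =>
    obtain ⟨f, hf, w, hw, hu, h⟩ := h
    by_cases hfe : f = e
    · subst hfe
      rcases ih h with h' | ⟨a, ha, b, hb, k₁, k₂, hk, -, h₂⟩
      · exact Or.inr ⟨u, hu, w, hw, 0, k, by omega, rfl, h'⟩
      · exact Or.inr ⟨u, hu, b, hb, 0, k₂, by omega, rfl, h₂⟩
    · have hf' : f ∈ E.erase e := Finset.mem_erase.2 ⟨hfe, hf⟩
      rcases ih h with h' | ⟨a, ha, b, hb, k₁, k₂, hk, h₁, h₂⟩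
      · exact Or.inl ⟨f, hf', w, hw, hu, h'⟩
      · exact Or.inr ⟨a, ha, b, hb, k₁ + 1, k₂, by omega, ⟨f, hf', w, hw, hu, h₁⟩, h₂⟩

theorem hdist_le {k : ℕ} {u v : Fin n} (h : hconn E k u v) : hdist E u v ≤ k :=
  Nat.sInf_le h

theorem hconn_hdist (hc : HConnected E) (u v : Fin n) : hconn E (hdist E u v) u v :=
  Nat.sInf_mem (hc u v)

theorem hdist_comm (E : Finset (Finset (Fin n))) (u v : Fin n) : hdist E u v = hdist E v u := by
  unfold hdist
  congr 1
  ext k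
  exact ⟨hconn.symm, hconn.symm⟩

theorem hdist_triangle (hc : HConnected E) (u v w : Fin n) :
    hdist E u w ≤ hdist E u v + hdist E v w :=
  hdist_le ((hconn_hdist hc u v).trans (hconn_hdist hc v w))

theorem hdist_le_hdiam (E : Finset (Finset (Fin n))) (u v : Fin n) : hdist E u v ≤ hdiam E := by
  refine le_csSup ?_ ⟨u, v, rfl⟩
  refine ((Set.finite_range fun p : Fin n × Fin n => hdist E p.1 p.2).subset ?_).bddAbove
  rintro _ ⟨a, b, rfl⟩
  exact ⟨(a, b), rfl⟩

theorem hdiam_le {m : ℕ} (h : ∀ u v, hdist E u v ≤ m) : hdiam E ≤ m :=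
  csSup_le' (by rintro _ ⟨u, v, rfl⟩; exact h u v)

theorem exists_mem_hdist_erase_add_lt {e : Finset (Fin n)} (hc : HConnected E) {u v : Fin n}
    (h : hdist E u v < hdist (E.erase e) u v) :
    ∃ a ∈ e, ∃ b ∈ e, hdist (E.erase e) u a + hdist (E.erase e) b v < hdist E u v := by
  rcases (hconn_hdist hc u v).erase_or_exists (e := e) with h' | ⟨a, ha, b, hb, k₁, k₂, hk, h₁, h₂⟩
  · exact absurd (hdist_le h') h.not_ge
  · exact ⟨a, ha, b, hb, by have := hdist_le h₁; have := hdist_le h₂; omega⟩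

theorem exists_spaced_points (hc : HConnected E) {u v : Fin n} {m s : ℕ}
    (h : m * s ≤ hdist E u v) :
    ∃ y : ℕ → Fin n, ∀ j k, j ≤ k → k ≤ m → (k - j) * s ≤ hdist E (y j) (y k) := by
  set M := hdist E u v
  have hmark : ∀ j, ∃ w, j ≤ m → hconn E (j * s) u w ∧ hconn E (M - j * s) w v := by
    intro j
    by_cases hj : j ≤ m
    · have hjs : j * s ≤ M := (Nat.mul_le_mul_right s hj).trans h
      obtain ⟨w, h₁, h₂⟩ := hconn.exists_of_add (a := j * s) (b := M - j * s)
        (by rw [Nat.add_sub_cancel' hjs]; exact hconn_hdist hc u v)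
      exact ⟨w, fun _ => ⟨h₁, h₂⟩⟩
    · exact ⟨u, fun h => absurd h hj⟩
  choose y hy using hmark
  refine ⟨y, fun j k hjk hkm => ?_⟩
  obtain ⟨hj, -⟩ := hy j (hjk.trans hkm)
  obtain ⟨-, hk⟩ := hy k hkm
  have hwalk := hdist_le ((hj.trans (hconn_hdist hc (y j) (y k))).trans hk)
  have hks : k * s ≤ M := (Nat.mul_le_mul_right s hkm).trans h
  have hjks : j * s ≤ k * s := Nat.mul_le_mul_right s hjk
  rw [Nat.sub_mul]
  omega

theorem lt_card_of_spaced_points {e : Finset (Fin n)} (hc : HConnected E)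
    (hc' : HConnected (E.erase e)) {D : ℕ} (hdistE : ∀ u v, hdist E u v ≤ D)
    (he : e.Nonempty) {r : ℕ} {y : ℕ → Fin n}
    (hy : ∀ j k, j ≤ k → k ≤ r → (k - j) * (D + 1) ≤ hdist (E.erase e) (y j) (y k)) :
    r < e.card := by
  set E' := E.erase e with hE'
  choose c hce hcmin using fun j => e.exists_min_image (hdist E' (y j)) he
  have hstep : ∀ j < r, hdist E' (y j) (c j) + hdist E' (y (j + 1)) (c (j + 1)) < D := by
    intro j hj
    have hfar : hdist E (y j) (y (j + 1)) < hdist E' (y j) (y (j + 1)) := by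
      have := hy j (j + 1) (by omega) hj
      have := hdistE (y j) (y (j + 1))
      rw [Nat.add_sub_cancel_left, one_mul] at *
      omega
    obtain ⟨a, ha, b, hb, hab⟩ := exists_mem_hdist_erase_add_lt hc hfar
    rw [← hE', hdist_comm E' b] at hab
    have := hcmin j a ha
    have := hcmin (j + 1) b hb
    have := hdistE (y j) (y (j + 1))
    omega
  have hinj : Set.InjOn c (Finset.range (r + 1)) := by
    intro j hj k hk hjk
    by_contra hne
    wlog hlt : j < k generalizing j k
    · exact this hk hj hjk.symm (Ne.symm hne) (by omega)
    simp only [Finset.coe_range, Set.mem_Iio] at hj hk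
    have hshort : hdist E' (y j) (y k) ≤ hdist E' (y j) (c j) + hdist E' (y k) (c k) := by
      calc hdist E' (y j) (y k) ≤ hdist E' (y j) (c j) + hdist E' (c j) (y k) :=
            hdist_triangle hc' _ _ _
        _ = _ := by rw [hjk, hdist_comm E' (c k)]
    have hlong := hy j k hlt.le (by omega)
    have := hstep j (by omega)
    have := hstep (k - 1) (by omega)
    rw [Nat.sub_add_cancel (by omega)] at this
    rcases Nat.lt_or_ge (j + 1) k with hgap | hadj
    · have : 2 * (D + 1) ≤ (k - j) * (D + 1) := Nat.mul_le_mul_right _ (by omega)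
      omega
    · rw [show k - j = 1 by omega, one_mul] at hlong
      rw [show k = j + 1 by omega] at hlong hshort
      omega
  simpa using Finset.card_le_card_of_injOn c (fun j _ => hce j) hinj

end Hypergraph

theorem stmt_12 (n r : ℕ) (hr : 2 ≤ r) (E : Finset (Finset (Fin n)))
    (hu : ∀ e ∈ E, e.card = r) (hc : HConnected E) (D : ℕ) (hD : hdiam E = D)
    (e : Finset (Fin n)) (he : e ∈ E) (hc' : HConnected (E.erase e)) :
    hdiam (E.erase e) ≤ r * (D + 1) := by
  have hdistE : ∀ u v, hdist E u v ≤ D := fun u v => hD ▸ hdist_le_hdiam E u v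
  have hne : e.Nonempty := Finset.card_pos.1 (by rw [hu e he]; omega)
  refine hdiam_le fun u v => ?_
  by_contra! hlong
  obtain ⟨y, hy⟩ := exists_spaced_points hc' hlong.le
  have hcard := lt_card_of_spaced_points hc hc' hdistE hne hy
  rw [hu e he] at hcard
  exact lt_irrefl r hcard
end

section
/- Let r ≥ 2 and let A be the order-r dimension-n adjacency tensor of a connected r-uniform hypergraph H with spectral radius ρ and principal eigenvector x (the unique positive vector with ∑ x_i^r = 1 and A x^{r−1} = ρ x^{[r−1]}). If vertices u, v are adjacent (both contained in some edge of H), then 1/ρ ≤ x_u/x_v ≤ ρ. -/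
/-- The eigenvalue equation `A(H) x^{r-1} = ρ x^{[r-1]}` for the adjacency tensor of an
`r`-uniform hypergraph with edge set `E`: the `i`-th entry of `A(H) x^{r-1}` equals
`∑_{e ∋ i} ∏_{j ∈ e \ {i}} x_j`. -/
def EigenEq {n : ℕ} (E : Finset (Finset (Fin n))) (r : ℕ) (ρ : ℝ) (x : Fin n → ℝ) : Prop :=
  ∀ i : Fin n, ∑ e ∈ E.filter (fun e => i ∈ e), ∏ j ∈ e.erase i, x j = ρ * x i ^ (r - 1)

theorem Finset.mul_pow_card_sub_one_le_prod {ι R : Type*} [DecidableEq ι] [CommSemiring R]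
    [PartialOrder R] [IsOrderedRing R] {s : Finset ι} {f : ι → R} {a : ι} {m : R}
    (ha : a ∈ s) (hm0 : 0 ≤ m) (hm : ∀ j ∈ s, m ≤ f j) :
    f a * m ^ (s.card - 1) ≤ ∏ j ∈ s, f j := by
  rw [← Finset.mul_prod_erase s f ha, ← Finset.card_erase_of_mem ha, ← Finset.prod_const]
  exact mul_le_mul_of_nonneg_left
    (Finset.prod_le_prod (fun _ _ => hm0) fun j hj => hm j (Finset.mem_of_mem_erase hj))
    (hm0.trans (hm a ha))

namespace EigenEq

variable {n r : ℕ} {E : Finset (Finset (Fin n))} {ρ : ℝ} {x : Fin n → ℝ}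
  {e : Finset (Fin n)}

theorem prod_le (heig : EigenEq E r ρ x) (hx : ∀ i, 0 ≤ x i) (he : e ∈ E) {i : Fin n}
    (hi : i ∈ e) : ∏ j ∈ e, x j ≤ ρ * x i ^ (r - 1) * x i := by
  rw [← Finset.mul_prod_erase e x hi, mul_comm (x i), ← heig i]
  refine mul_le_mul_of_nonneg_right ?_ (hx i)
  exact Finset.single_le_sum (f := fun s => ∏ j ∈ s.erase i, x j)
    (fun s _ => Finset.prod_nonneg fun j _ => hx j)
    ((Finset.mem_filter (p := (i ∈ ·))).2 ⟨he, hi⟩)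

theorem le_mul_of_forall_le (heig : EigenEq E r ρ x) (hx : ∀ i, 0 < x i) (he : e ∈ E)
    (hcard : e.card = r) {w a : Fin n} (hw : w ∈ e) (hmin : ∀ j ∈ e, x w ≤ x j)
    (ha : a ∈ e) : x a ≤ ρ * x w := by
  have hlow := Finset.mul_pow_card_sub_one_le_prod ha (hx w).le hmin
  rw [hcard] at hlow
  refine le_of_mul_le_mul_right ?_ (pow_pos (hx w) (r - 1))
  calc x a * x w ^ (r - 1) ≤ ∏ j ∈ e, x j := hlow
    _ ≤ ρ * x w ^ (r - 1) * x w := heig.prod_le (fun i => (hx i).le) he hw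
    _ = ρ * x w * x w ^ (r - 1) := by ring

theorem le_mul_of_mem_edge (heig : EigenEq E r ρ x) (hx : ∀ i, 0 < x i) (he : e ∈ E)
    (hcard : e.card = r) {a b : Fin n} (ha : a ∈ e) (hb : b ∈ e) : x a ≤ ρ * x b := by
  obtain ⟨w, hw, hmin⟩ := e.exists_min_image x ⟨a, ha⟩
  have hρ : 1 ≤ ρ :=
    (le_mul_iff_one_le_left (hx w)).1 (heig.le_mul_of_forall_le hx he hcard hw hmin hw)
  calc x a ≤ ρ * x w := heig.le_mul_of_forall_le hx he hcard hw hmin ha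
    _ ≤ ρ * x b := mul_le_mul_of_nonneg_left (hmin b hb) (zero_le_one.trans hρ)

end EigenEq

theorem stmt_14_general (n r : ℕ) (E : Finset (Finset (Fin n)))
    (hu : ∀ e ∈ E, e.card = r)
    (ρ : ℝ) (x : Fin n → ℝ) (hx : ∀ i, 0 < x i)
    (heig : EigenEq E r ρ x)
    (u v : Fin n) (hadj : ∃ e ∈ E, u ∈ e ∧ v ∈ e) :
    1 / ρ ≤ x u / x v ∧ x u / x v ≤ ρ := by
  obtain ⟨e, he, hue, hve⟩ := hadj
  have hvu : x v ≤ ρ * x u := heig.le_mul_of_mem_edge hx he (hu e he) hve hue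
  have huv : x u ≤ ρ * x v := heig.le_mul_of_mem_edge hx he (hu e he) hue hve
  have hρ : 0 < ρ := pos_of_mul_pos_left ((hx v).trans_le hvu) (hx u).le
  constructor
  · rw [div_le_div_iff₀ hρ (hx v)]
    linarith
  · rwa [div_le_iff₀ (hx v)]

theorem stmt_14 (n r : ℕ) (hr : 2 ≤ r) (E : Finset (Finset (Fin n)))
    (hu : ∀ e ∈ E, e.card = r) (hc : HConnected E)
    (ρ : ℝ) (x : Fin n → ℝ) (hx : ∀ i, 0 < x i) (hnorm : ∑ i, x i ^ r = 1)
    (heig : EigenEq E r ρ x)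
    (u v : Fin n) (hne : u ≠ v) (hadj : ∃ e ∈ E, u ∈ e ∧ v ∈ e) :
    1 / ρ ≤ x u / x v ∧ x u / x v ≤ ρ :=
  stmt_14_general n r E hu ρ x hx heig u v hadj
end

section
/- Let H be a connected r-uniform linear hypergraph (any two edges share at most one vertex) with spectral radius ρ and principal eigenvector x (positive, ∑ x_i^r = 1). For a vertex v of degree d, x_v ≤ (1 + (r−1)·(ρ^r/d)^{1/(r−1)})^{−1/r}. -/
open Finset

namespace Real

theorem prod_rpow_div_card_le_sum_rpow_div_card {ι : Type*} {s : Finset ι} (hs : s.Nonempty)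
    {x : ι → ℝ} (hx : ∀ i ∈ s, 0 ≤ x i) (p : ℝ) :
    (∏ i ∈ s, x i) ^ (p / #s) ≤ (∑ i ∈ s, x i ^ p) / #s := by
  have hcard : (0 : ℝ) < #s := by exact_mod_cast hs.card_pos
  have amgm := geom_mean_le_arith_mean_weighted s (fun _ ↦ (#s : ℝ)⁻¹) (fun i ↦ x i ^ p)
    (fun _ _ ↦ by positivity) (by simp [hcard.ne']) (fun i hi ↦ rpow_nonneg (hx i hi) p)
  calc (∏ i ∈ s, x i) ^ (p / #s) = ∏ i ∈ s, (x i ^ p) ^ (#s : ℝ)⁻¹ := by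
        rw [← finsetProd_rpow s x hx]
        exact prod_congr rfl fun i hi ↦ by rw [← rpow_mul (hx i hi), div_eq_mul_inv]
    _ ≤ ∑ i ∈ s, (#s : ℝ)⁻¹ * x i ^ p := amgm
    _ = (∑ i ∈ s, x i ^ p) / #s := by rw [← mul_sum, inv_mul_eq_div]

end Real

section LinearHypergraph

variable {α : Type*} [DecidableEq α] {E : Finset (Finset α)}

theorem pairwiseDisjoint_erase_of_linear (hlin : ∀ e ∈ E, ∀ f ∈ E, e ≠ f → #(e ∩ f) ≤ 1)
    (v : α) : (E.filter (v ∈ ·) : Set (Finset α)).PairwiseDisjoint (·.erase v) := by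
  intro e he f hf hef
  simp only [coe_filter, Set.mem_ofPred_eq] at he hf
  refine disjoint_left.mpr fun j hje hjf ↦ ?_
  have hpair : {v, j} ⊆ e ∩ f := by
    simp only [insert_subset_iff, singleton_subset_iff, mem_inter]
    exact ⟨⟨he.2, hf.2⟩, mem_of_mem_erase hje, mem_of_mem_erase hjf⟩
  have := card_le_card hpair
  rw [card_pair (ne_of_mem_erase hje).symm] at this
  exact absurd (hlin e he.1 f hf.1 hef) (by omega)

theorem sum_sum_erase_le_of_linear [Fintype α]
    (hlin : ∀ e ∈ E, ∀ f ∈ E, e ≠ f → #(e ∩ f) ≤ 1) (v : α) {y : α → ℝ} (hy : ∀ i, 0 ≤ y i) :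
    ∑ e ∈ E.filter (v ∈ ·), ∑ j ∈ e.erase v, y j ≤ ∑ j ∈ univ.erase v, y j := by
  rw [← sum_biUnion (pairwiseDisjoint_erase_of_linear hlin v)]
  refine sum_le_sum_of_subset_of_nonneg (fun j hj ↦ ?_) fun i _ _ ↦ hy i
  obtain ⟨e, -, hje⟩ := mem_biUnion.mp hj
  exact mem_erase.mpr ⟨ne_of_mem_erase hje, mem_univ j⟩

end LinearHypergraph

theorem EigenEq.eigenvalue_nonneg {n r : ℕ} {E : Finset (Finset (Fin n))} {ρ : ℝ} {x : Fin n → ℝ}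
    (heig : EigenEq E r ρ x) (hx : ∀ i, 0 < x i) (v : Fin n) : 0 ≤ ρ := by
  have h := heig v
  have : 0 ≤ ρ * x v ^ (r - 1) := h ▸ sum_nonneg fun e _ ↦ prod_nonneg fun j _ ↦ (hx j).le
  exact nonneg_of_mul_nonneg_left this (pow_pos (hx v) _)

theorem EigenEq.rpow_le_of_linear {n r : ℕ} (hr : 2 ≤ r) {E : Finset (Finset (Fin n))}
    (hu : ∀ e ∈ E, e.card = r) (hlin : ∀ e ∈ E, ∀ f ∈ E, e ≠ f → (e ∩ f).card ≤ 1)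
    {ρ : ℝ} {x : Fin n → ℝ} (hx : ∀ i, 0 < x i) (hnorm : ∑ i, x i ^ r = 1)
    (heig : EigenEq E r ρ x) (v : Fin n) :
    (ρ * x v ^ (r - 1)) ^ ((r : ℝ) / (r - 1)) ≤
      (hdeg E v : ℝ) ^ (1 / ((r : ℝ) - 1)) * ((1 - x v ^ r) / (r - 1)) := by
  have hr1 : (1 : ℝ) < r := by exact_mod_cast hr
  have hcast : (((r - 1 : ℕ) : ℝ)) = r - 1 := by rw [Nat.cast_sub (by omega), Nat.cast_one]
  have hq : (1 : ℝ) ≤ r / (r - 1) := by rw [le_div_iff₀ (by linarith)]; linarith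
  have hq1 : (r : ℝ) / (r - 1) - 1 = 1 / (r - 1) := by rw [div_sub_one (by linarith)]; ring_nf
  have hedge : ∀ e ∈ E.filter (v ∈ ·),
      (∏ j ∈ e.erase v, x j) ^ ((r : ℝ) / (r - 1)) ≤ (∑ j ∈ e.erase v, x j ^ r) / (r - 1) := by
    intro e he
    obtain ⟨heE, hve⟩ := mem_filter.mp he
    have hcard : #(e.erase v) = r - 1 := by rw [card_erase_of_mem hve, hu e heE]
    have hne : (e.erase v).Nonempty := card_pos.mp (by omega)
    simpa only [hcard, hcast, Real.rpow_natCast] using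
      Real.prod_rpow_div_card_le_sum_rpow_div_card hne (fun j _ ↦ (hx j).le) r
  calc (ρ * x v ^ (r - 1)) ^ ((r : ℝ) / (r - 1))
      = (∑ e ∈ E.filter (v ∈ ·), ∏ j ∈ e.erase v, x j) ^ ((r : ℝ) / (r - 1)) := by
        rw [heig v]
    _ ≤ (hdeg E v : ℝ) ^ (1 / ((r : ℝ) - 1)) *
          ∑ e ∈ E.filter (v ∈ ·), (∏ j ∈ e.erase v, x j) ^ ((r : ℝ) / (r - 1)) := by
        rw [← hq1]
        exact Real.rpow_sum_le_const_mul_sum_rpow_of_nonneg _ hq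
          fun e _ ↦ prod_nonneg fun j _ ↦ (hx j).le
    _ ≤ (hdeg E v : ℝ) ^ (1 / ((r : ℝ) - 1)) *
          ((∑ e ∈ E.filter (v ∈ ·), ∑ j ∈ e.erase v, x j ^ r) / (r - 1)) := by
        rw [sum_div]
        gcongr with e he
        exact hedge e he
    _ ≤ (hdeg E v : ℝ) ^ (1 / ((r : ℝ) - 1)) * ((1 - x v ^ r) / (r - 1)) := by
        have hrest : 1 - x v ^ r = ∑ j ∈ univ.erase v, x j ^ r := by
          rw [← hnorm, ← sum_erase_add _ _ (mem_univ v), add_sub_cancel_right]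
        rw [hrest]
        gcongr
        exact sum_sum_erase_le_of_linear hlin v fun i ↦ pow_nonneg (hx i).le r

theorem le_rpow_neg_inv_of_mul_pow_le_one_sub {a K : ℝ} {r : ℕ} (ha : 0 ≤ a) (hK : 0 ≤ K)
    (hr : r ≠ 0) (h : K * a ^ r ≤ 1 - a ^ r) : a ≤ (1 + K) ^ (-1 / r : ℝ) := by
  have h1K : 0 < 1 + K := by linarith
  rw [neg_div, one_div, Real.rpow_neg h1K.le, ← Real.inv_rpow h1K.le,
    Real.le_rpow_inv_iff_of_pos ha (by positivity) (by positivity), Real.rpow_natCast,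
    ← one_div, le_div_iff₀ h1K]
  linarith

theorem mul_rpow_mul_pow_le_one_sub {r d : ℕ} (hr : 2 ≤ r) {ρ a : ℝ} (hρ : 0 ≤ ρ) (ha : 0 ≤ a)
    (ha1 : a ^ r ≤ 1)
    (h : (ρ * a ^ (r - 1)) ^ ((r : ℝ) / (r - 1)) ≤
      (d : ℝ) ^ (1 / ((r : ℝ) - 1)) * ((1 - a ^ r) / (r - 1))) :
    ((r : ℝ) - 1) * (ρ ^ r / d) ^ (1 / ((r : ℝ) - 1)) * a ^ r ≤ 1 - a ^ r := by
  have hp : (0 : ℝ) < r - 1 := by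
    have : (2 : ℝ) ≤ r := by exact_mod_cast hr
    linarith
  rcases (Nat.zero_le d).eq_or_lt with rfl | hd
  · -- `ρ ^ r / 0 = 0`, so the claim is just `a ^ r ≤ 1`
    rw [Nat.cast_zero, div_zero, Real.zero_rpow (by positivity)]
    linarith
  have hd' : (0 : ℝ) < d := by exact_mod_cast hd
  have hDpos : (0 : ℝ) < (d : ℝ) ^ (1 / ((r : ℝ) - 1)) := by positivity
  have hcast : (((r - 1 : ℕ) : ℝ)) = r - 1 := by rw [Nat.cast_sub (by omega), Nat.cast_one]
  have hlhs : (ρ ^ r / d) ^ (1 / ((r : ℝ) - 1)) * a ^ r =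
      (ρ * a ^ (r - 1)) ^ ((r : ℝ) / (r - 1)) / (d : ℝ) ^ (1 / ((r : ℝ) - 1)) := by
    rw [Real.div_rpow (by positivity) hd'.le, Real.mul_rpow hρ (by positivity),
      ← Real.rpow_natCast ρ, ← Real.rpow_natCast a, ← Real.rpow_natCast a, hcast,
      ← Real.rpow_mul hρ, ← Real.rpow_mul ha, mul_div_cancel₀ _ hp.ne', mul_one_div]
    ring
  calc ((r : ℝ) - 1) * (ρ ^ r / d) ^ (1 / ((r : ℝ) - 1)) * a ^ r
      = (r - 1) * ((ρ * a ^ (r - 1)) ^ ((r : ℝ) / (r - 1)) / (d : ℝ) ^ (1 / ((r : ℝ) - 1))) := by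
        rw [mul_assoc, hlhs]
    _ ≤ (r - 1) * ((d : ℝ) ^ (1 / ((r : ℝ) - 1)) * ((1 - a ^ r) / (r - 1)) /
          (d : ℝ) ^ (1 / ((r : ℝ) - 1))) := by gcongr
    _ = 1 - a ^ r := by field_simp

theorem stmt_16_general (n r : ℕ) (hr : 2 ≤ r) (E : Finset (Finset (Fin n)))
    (hu : ∀ e ∈ E, e.card = r)
    (hlin : ∀ e ∈ E, ∀ f ∈ E, e ≠ f → (e ∩ f).card ≤ 1)
    (ρ : ℝ) (x : Fin n → ℝ) (hx : ∀ i, 0 < x i) (hnorm : ∑ i, x i ^ r = 1)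
    (heig : EigenEq E r ρ x)
    (v : Fin n) (d : ℕ) (hd : hdeg E v = d) :
    x v ≤ (1 + ((r : ℝ) - 1) * (ρ ^ r / d) ^ ((1 : ℝ) / ((r : ℝ) - 1))) ^
      (-(1 : ℝ) / r) := by
  have hρ : 0 ≤ ρ := heig.eigenvalue_nonneg hx v
  have hxv : x v ^ r ≤ 1 :=
    hnorm ▸ single_le_sum (fun i _ ↦ pow_nonneg (hx i).le r) (mem_univ v)
  have hlocal := heig.rpow_le_of_linear hr hu hlin hx hnorm v
  rw [hd] at hlocal
  have hK : 0 ≤ ((r : ℝ) - 1) * (ρ ^ r / d) ^ ((1 : ℝ) / ((r : ℝ) - 1)) :=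
    mul_nonneg (sub_nonneg.mpr (by exact_mod_cast (by omega : 1 ≤ r))) (by positivity)
  refine le_rpow_neg_inv_of_mul_pow_le_one_sub (hx v).le hK (by omega) ?_
  exact mul_rpow_mul_pow_le_one_sub hr hρ (hx v).le hxv hlocal

theorem stmt_16 (n r : ℕ) (hr : 2 ≤ r) (E : Finset (Finset (Fin n)))
    (hu : ∀ e ∈ E, e.card = r) (hc : HConnected E)
    (hlin : ∀ e ∈ E, ∀ f ∈ E, e ≠ f → (e ∩ f).card ≤ 1)
    (ρ : ℝ) (x : Fin n → ℝ) (hx : ∀ i, 0 < x i) (hnorm : ∑ i, x i ^ r = 1)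
    (heig : EigenEq E r ρ x)
    (v : Fin n) (d : ℕ) (hd : hdeg E v = d) :
    x v ≤ (1 + ((r : ℝ) - 1) * (ρ ^ r / d) ^ ((1 : ℝ) / ((r : ℝ) - 1))) ^
      (-(1 : ℝ) / r) :=
  stmt_16_general n r hr E hu hlin ρ x hx hnorm heig v d hd
end

section
/- Let H be a connected r-uniform linear hypergraph on n vertices with spectral radius ρ, minimum degree δ, and principal eigenvector x (positive, ∑ x_i^r = 1). Then the minimum entry satisfies x_min ≤ ((r−1)·(ρ^r/δ)^{1/(r−1)} + n − δ(r−1))^{−1/r}. -/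
theorem stmt_18 (n r : ℕ) (hr : 2 ≤ r) (hn : 0 < n) (E : Finset (Finset (Fin n)))
    (hu : ∀ e ∈ E, e.card = r) (hc : HConnected E)
    (hlin : ∀ e ∈ E, ∀ f ∈ E, e ≠ f → (e ∩ f).card ≤ 1)
    (ρ : ℝ) (x : Fin n → ℝ) (hx : ∀ i, 0 < x i) (hnorm : ∑ i, x i ^ r = 1)
    (heig : EigenEq E r ρ x)
    (δ : ℕ) (hδ : δ = Finset.univ.inf' ⟨⟨0, hn⟩, Finset.mem_univ _⟩ (hdeg E)) :
    Finset.univ.inf' ⟨⟨0, hn⟩, Finset.mem_univ _⟩ x ≤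
      (((r : ℝ) - 1) * (ρ ^ r / δ) ^ ((1 : ℝ) / ((r : ℝ) - 1)) +
        (n : ℝ) - (δ : ℝ) * ((r : ℝ) - 1)) ^ (-(1 : ℝ) / r) := by
  have hrR : (2:ℝ) ≤ (r:ℝ) := by exact_mod_cast hr
  set q : ℝ := (r:ℝ) - 1 with hq_def
  have hq : 0 < q := by rw [hq_def]; linarith
  set m := Finset.univ.inf' ⟨⟨0, hn⟩, Finset.mem_univ _⟩ x with hm_def
  have hm_le : ∀ i : Fin n, m ≤ x i := fun i => Finset.inf'_le _ (Finset.mem_univ i)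
  obtain ⟨i0, -, hmi0⟩ :=
    Finset.exists_mem_eq_inf' (⟨⟨0, hn⟩, Finset.mem_univ _⟩ : (Finset.univ : Finset (Fin n)).Nonempty) x
  have hm_pos : 0 < m := by rw [hm_def, hmi0]; exact hx i0
  rcases lt_or_ge n 2 with h2 | h2
  · -- n = 1 case
    have hn1 : n = 1 := by omega
    subst hn1
    have hE : E = ∅ := by
      rw [Finset.eq_empty_iff_forall_notMem]
      intro e he
      have h1 := hu e he
      have h2 : e.card ≤ 1 := by
        calc e.card ≤ (Finset.univ : Finset (Fin 1)).card := Finset.card_le_card (Finset.subset_univ e)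
        _ = 1 := by simp
      omega
    have hδ0 : δ = 0 := by
      have hle : Finset.univ.inf' ⟨⟨0, hn⟩, Finset.mem_univ _⟩ (hdeg E) ≤ hdeg E ⟨0, hn⟩ :=
        Finset.inf'_le _ (Finset.mem_univ _)
      have h0 : hdeg E ⟨0, hn⟩ = 0 := by simp [hdeg, hE]
      omega
    have hρ0 : ρ = 0 := by
      have h := heig ⟨0, hn⟩
      rw [hE] at h
      simp only [Finset.filter_empty, Finset.sum_empty] at h
      have hxp : 0 < x ⟨0, hn⟩ ^ (r - 1) := pow_pos (hx _) _
      rcases mul_eq_zero.mp h.symm with h' | h'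
      · exact h'
      · exact absurd h' hxp.ne'
    have hm1 : m = 1 := by
      have hx1 : x ⟨0, hn⟩ ^ r = 1 := by
        rw [← hnorm]
        rw [Finset.sum_eq_single_of_mem ⟨0, hn⟩ (Finset.mem_univ _)]
        intro b _ hb
        exact absurd (Subsingleton.elim b ⟨0, hn⟩) hb
      have hmx : m = x ⟨0, hn⟩ := by
        rw [hm_def, hmi0]; congr 1; exact Subsingleton.elim _ _
      rw [hmx]
      rcases lt_trichotomy (x ⟨0, hn⟩) 1 with h | h | h
      · have := pow_lt_one₀ (hx ⟨0, hn⟩).le h (show r ≠ 0 by omega)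
        exact absurd hx1 (by linarith)
      · exact h
      · have := one_lt_pow₀ h (show r ≠ 0 by omega)
        exact absurd hx1 (by linarith)
    rw [hδ0, hρ0, hm1]
    have : ((0:ℝ)^r / ((0:ℕ):ℝ)) ^ ((1:ℝ)/q) = 0 := by
      rw [zero_pow (show r ≠ 0 by omega), zero_div, Real.zero_rpow (by positivity)]
    rw [this]
    norm_num
  · -- main case : 2 ≤ n
    have hdeg1 : ∀ v : Fin n, 1 ≤ hdeg E v := by
      intro v
      obtain ⟨w, hw⟩ : ∃ w : Fin n, w ≠ v := by
        by_cases hv : v = ⟨0, hn⟩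
        · exact ⟨⟨1, by omega⟩, by rw [hv]; exact Fin.ne_of_val_ne (by simp)⟩
        · exact ⟨⟨0, hn⟩, fun h => hv h.symm⟩
      obtain ⟨k, hk⟩ := hc v w
      cases k with
      | zero =>
        simp only [hconn] at hk
        exact absurd hk.symm hw
      | succ k =>
        obtain ⟨e, heE, w', _, hve, _⟩ := hk
        have hmem : e ∈ E.filter (fun e => v ∈ e) := Finset.mem_filter.mpr ⟨heE, hve⟩
        exact Finset.card_pos.mpr ⟨e, hmem⟩
    obtain ⟨u, -, huδ⟩ :=
      Finset.exists_mem_eq_inf'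
        (⟨⟨0, hn⟩, Finset.mem_univ _⟩ : (Finset.univ : Finset (Fin n)).Nonempty) (hdeg E)
    have hδu : δ = hdeg E u := hδ.trans huδ
    set F := E.filter (fun e => u ∈ e) with hF_def
    have hFcard : F.card = δ := hδu.symm
    have hδ1 : 1 ≤ δ := by rw [hδu]; exact hdeg1 u
    have hδR : (0:ℝ) < (δ:ℝ) := by exact_mod_cast hδ1
    have hFne : F.Nonempty := Finset.card_pos.mp (by omega)
    have hFE : ∀ e ∈ F, e ∈ E ∧ u ∈ e := fun e he => Finset.mem_filter.mp he
    have hecard : ∀ e ∈ F, (e.erase u).card = r - 1 := by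
      intro e he
      rw [Finset.card_erase_of_mem (hFE e he).2, hu e (hFE e he).1]
    have hqcast : ((r - 1 : ℕ) : ℝ) = q := by
      rw [Nat.cast_sub (by omega), Nat.cast_one, hq_def]
    set s : ℝ := (r:ℝ) / q with hs_def
    have hs1 : (1:ℝ) ≤ s := by
      rw [hs_def, le_div_iff₀ hq]; linarith
    have hqs : q * s = (r:ℝ) := by
      rw [hs_def]; field_simp
    -- AM-GM per edge
    have hAMGM : ∀ e ∈ F, q * (∏ j ∈ e.erase u, x j) ^ s ≤ ∑ j ∈ e.erase u, x j ^ r := by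
      intro e he
      have h := Real.geom_mean_le_arith_mean_weighted (e.erase u) (fun _ => 1/q)
          (fun j => x j ^ r)
          (fun i _ => by positivity)
          (by rw [Finset.sum_const, hecard e he, nsmul_eq_mul, hqcast]; field_simp)
          (fun i _ => pow_nonneg (hx i).le r)
      have hL : ∏ j ∈ e.erase u, ((x j ^ r : ℝ) ^ ((1:ℝ)/q)) = (∏ j ∈ e.erase u, x j) ^ s := by
        rw [← Real.finset_prod_rpow _ _ (fun i _ => (hx i).le) s]
        refine Finset.prod_congr rfl fun j _ => ?_
        rw [← Real.rpow_natCast (x j) r, ← Real.rpow_mul (hx j).le]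
        rw [mul_one_div, hs_def]
      rw [hL, ← Finset.mul_sum] at h
      calc q * (∏ j ∈ e.erase u, x j) ^ s
          ≤ q * ((1/q) * ∑ j ∈ e.erase u, x j ^ r) := mul_le_mul_of_nonneg_left h hq.le
        _ = ∑ j ∈ e.erase u, x j ^ r := by field_simp
    -- the eigen equation at u
    have hsum : ∑ e ∈ F, ∏ j ∈ e.erase u, x j = ρ * x u ^ (r - 1) := heig u
    have hT_pos : 0 < ρ * x u ^ (r - 1) := by
      rw [← hsum]
      exact Finset.sum_pos (fun e _ => Finset.prod_pos fun j _ => hx j) hFne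
    have hρ : 0 < ρ := by
      have h := pow_pos (hx u) (r - 1)
      nlinarith
    -- Jensen
    have hJ := Real.rpow_arith_mean_le_arith_mean_rpow F (fun _ => 1/(δ:ℝ))
        (fun e => ∏ j ∈ e.erase u, x j)
        (fun i _ => by positivity)
        (by rw [Finset.sum_const, hFcard, nsmul_eq_mul]; field_simp)
        (fun e _ => Finset.prod_nonneg fun j _ => (hx j).le) hs1
    rw [← Finset.mul_sum, ← Finset.mul_sum, hsum] at hJ
    have hstep2 : (δ:ℝ) * ((1/(δ:ℝ)) * (ρ * x u ^ (r-1))) ^ s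
        ≤ ∑ e ∈ F, (∏ j ∈ e.erase u, x j) ^ s := by
      have h := mul_le_mul_of_nonneg_left hJ hδR.le
      calc (δ:ℝ) * ((1/(δ:ℝ)) * (ρ * x u ^ (r-1))) ^ s
          ≤ (δ:ℝ) * ((1/(δ:ℝ)) * ∑ e ∈ F, (∏ j ∈ e.erase u, x j) ^ s) := h
        _ = ∑ e ∈ F, (∏ j ∈ e.erase u, x j) ^ s := by field_simp
    set K : ℝ := (ρ ^ r / (δ:ℝ)) ^ ((1:ℝ)/q) with hK_def
    have hK0 : 0 ≤ K := Real.rpow_nonneg (by positivity) _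
    have hEq : (δ:ℝ) * ((1/(δ:ℝ)) * (ρ * x u ^ (r-1))) ^ s = K * x u ^ r := by
      have e1 : (1:ℝ)/(δ:ℝ) * (ρ * x u ^ (r-1)) = ρ * x u ^ (r-1) / (δ:ℝ) := by ring
      have e2 : (ρ * x u ^ (r-1) / (δ:ℝ)) ^ s
          = (ρ * x u ^ (r-1)) ^ s / (δ:ℝ) ^ s := Real.div_rpow hT_pos.le hδR.le s
      have e3 : (ρ * x u ^ (r-1) : ℝ) ^ s = (ρ ^ r) ^ ((1:ℝ)/q) * x u ^ r := by
        rw [Real.mul_rpow hρ.le (pow_nonneg (hx u).le _)]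
        congr 1
        · rw [← Real.rpow_natCast ρ r, ← Real.rpow_mul hρ.le, mul_one_div, hs_def]
        · rw [← Real.rpow_natCast (x u) (r-1), ← Real.rpow_mul (hx u).le, hqcast, hqs,
            Real.rpow_natCast]
      have e4 : (δ:ℝ) ^ s = (δ:ℝ) * (δ:ℝ) ^ ((1:ℝ)/q) := by
        have hs' : s = 1 + 1/q := by rw [hs_def, one_add_div hq.ne', hq_def]; ring
        rw [hs', Real.rpow_add hδR, Real.rpow_one]
      have h5 : (δ:ℝ) ^ ((1:ℝ)/q) ≠ 0 := (Real.rpow_pos_of_pos hδR _).ne'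
      rw [e1, e2, e3, e4, hK_def, Real.div_rpow (by positivity) hδR.le]
      field_simp
    -- neighbours
    set N := F.biUnion (fun e => e.erase u) with hN_def
    have hdisj : ∀ e ∈ F, ∀ f ∈ F, e ≠ f → Disjoint (e.erase u) (f.erase u) := by
      intro e he f hf hef
      rw [Finset.disjoint_left]
      intro j hje hjf
      have h1 := hlin e (hFE e he).1 f (hFE f hf).1 hef
      have h2 : u ∈ e ∩ f := Finset.mem_inter.mpr ⟨(hFE e he).2, (hFE f hf).2⟩
      have h3 : j ∈ e ∩ f := Finset.mem_inter.mpr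
        ⟨Finset.mem_of_mem_erase hje, Finset.mem_of_mem_erase hjf⟩
      have h4 : j ≠ u := Finset.ne_of_mem_erase hje
      have h5 : 1 < (e ∩ f).card := Finset.one_lt_card.mpr ⟨u, h2, j, h3, h4.symm⟩
      omega
    have hNsum : ∑ i ∈ N, x i ^ r = ∑ e ∈ F, ∑ j ∈ e.erase u, x j ^ r :=
      Finset.sum_biUnion (fun e he f hf hef => hdisj e he f hf hef)
    have hNcard : N.card = δ * (r - 1) := by
      rw [hN_def, Finset.card_biUnion (fun e he f hf hef => hdisj e he f hf hef)]
      rw [Finset.sum_congr rfl hecard, Finset.sum_const, hFcard, smul_eq_mul]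
    have huN : u ∉ N := by simp [hN_def]
    have hKx : q * (K * x u ^ r) ≤ ∑ i ∈ N, x i ^ r := by
      have hstep1 : ∑ e ∈ F, q * (∏ j ∈ e.erase u, x j) ^ s ≤ ∑ i ∈ N, x i ^ r := by
        rw [hNsum]; exact Finset.sum_le_sum hAMGM
      rw [← Finset.mul_sum] at hstep1
      rw [← hEq]
      exact le_trans (mul_le_mul_of_nonneg_left hstep2 hq.le) hstep1
    -- the rest of the vertices
    have hcardN_le : N.card + 1 ≤ n := by
      have h1 : (insert u N).card ≤ n := by
        calc (insert u N).card ≤ (Finset.univ : Finset (Fin n)).card :=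
              Finset.card_le_card (Finset.subset_univ _)
          _ = n := by rw [Finset.card_univ, Fintype.card_fin]
      rw [Finset.card_insert_of_notMem huN] at h1
      omega
    have hout : (↑(n - N.card) : ℝ) * m ^ r ≤ ∑ i ∈ Finset.univ \ N, x i ^ r := by
      have hcard : (Finset.univ \ N).card = n - N.card := by
        rw [Finset.card_sdiff_of_subset (Finset.subset_univ N), Finset.card_univ, Fintype.card_fin]
      have h := Finset.card_nsmul_le_sum (Finset.univ \ N) (fun i => x i ^ r) (m ^ r)
        (fun i _ => pow_le_pow_left₀ hm_pos.le (hm_le i) r)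
      rw [nsmul_eq_mul, hcard] at h
      exact h
    have hsplit : ∑ i ∈ Finset.univ \ N, x i ^ r + ∑ i ∈ N, x i ^ r = 1 := by
      rw [Finset.sum_sdiff (Finset.subset_univ N)]; exact hnorm
    have hcastN : (↑(n - N.card) : ℝ) = (n:ℝ) - (δ:ℝ) * q := by
      rw [Nat.cast_sub (by omega), hNcard]
      rw [hq_def]
      push_cast [Nat.cast_sub (show 1 ≤ r by omega)]
      try ring
    have hCm : (q * K + (n:ℝ) - (δ:ℝ) * q) * m ^ r ≤ 1 := by
      have h1 : q * (K * m ^ r) ≤ q * (K * x u ^ r) :=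
        mul_le_mul_of_nonneg_left
          (mul_le_mul_of_nonneg_left (pow_le_pow_left₀ hm_pos.le (hm_le u) r) hK0) hq.le
      have h2 : ((n:ℝ) - (δ:ℝ) * q) * m ^ r = (↑(n - N.card) : ℝ) * m ^ r := by
        rw [hcastN]
      nlinarith [hKx, hout, hsplit]
    have hδqn : (δ:ℝ) * q + 1 ≤ (n:ℝ) := by
      have h1 : δ * (r - 1) + 1 ≤ n := by omega
      have h2 : ((δ * (r - 1) + 1 : ℕ) : ℝ) ≤ (n:ℝ) := by exact_mod_cast h1
      push_cast [Nat.cast_sub (show 1 ≤ r by omega)] at h2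
      rw [hq_def]; linarith
    set C : ℝ := q * K + (n:ℝ) - (δ:ℝ) * q with hC_def
    have hCpos : (0:ℝ) < C := by rw [hC_def]; have := mul_nonneg hq.le hK0; linarith
    have hrne : ((r:ℕ):ℝ) ≠ 0 := by positivity
    have hCr : (C ^ ((-(1:ℝ))/(r:ℝ))) ^ r = C⁻¹ := by
      rw [← Real.rpow_natCast (C ^ ((-(1:ℝ))/(r:ℝ))) r,
        ← Real.rpow_mul hCpos.le, div_mul_cancel₀ _ hrne, Real.rpow_neg_one]
    have hmr : m ^ r ≤ C⁻¹ := by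
      rw [inv_eq_one_div, le_div_iff₀ hCpos, mul_comm]
      exact hCm
    have hfin : m ^ r ≤ (C ^ ((-(1:ℝ))/(r:ℝ))) ^ r := by
      rw [hCr]; exact hmr
    exact (pow_le_pow_iff_left₀ hm_pos.le (Real.rpow_nonneg hCpos.le _) (by omega)).mp hfin
end
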